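/- Let q be a prime power, 2 ≤ s ≤ t, and D' the code over F_q generated by (I_t | B̄) where the columns of B̄ are all vectors of F_q^t of weight exactly s. Set N = t + C(t,s)(q−1)^s and, for 0 ≤ r ≤ t, ψ(r) = Σ_{z=2}^{r} C(r,z) C(t−r, s−z) (q−1)^{s−z} Σ_{i=1}^{z−1} (q−1)^i (−1)^{z−1+i}. Then every codeword u(I_t | B̄) with u of Hamming weight r has Hamming weight N − t + r − ψ(r) − C(t−r, s)(q−1)^s. -/

import Mathlib

/-!
Since the generator matrix is systematic, the codeword `u (I_t | B̄)` has weight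
`wt u + #{v : wt v = s, u ⬝ᵥ v ≠ 0}`, so it suffices to count the weight-`s` vectors orthogonal
to `u`. Sort them by their support `T` and by `z = #(T ∩ supp u)`: there are
`C(r, z) C(t - r, s - z)` such supports, and on each one the coordinates outside `supp u` are free
in `F^×` while those in `T ∩ supp u` must solve one linear equation with nonzero coefficients,
which has `Z_z` solutions in `(F^×)^z`. Deleting a coordinate gives `Z_{z+1} = (q - 1)^z - Z_z`,
which unrolls to the alternating sum in `ψ`; the term `z = 0` is `C(t - r, s) (q - 1)^s` and
`Z_1 = 0`.
-/

open Finset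

lemma hammingNorm_sumElim {α β F : Type*} [Fintype α] [Fintype β] [Zero F] [DecidableEq F]
    (a : α → F) (b : β → F) : hammingNorm (Sum.elim a b) = hammingNorm a + hammingNorm b := by
  simp only [hammingNorm, card_filter, Fintype.sum_sum_type]
  rfl

lemma hammingNorm_subtype {α F : Type*} [Fintype α] [Zero F] [DecidableEq F] (p : α → Prop)
    [DecidablePred p] (f : α → F) :
    hammingNorm (fun x : {a // p a} => f x) = #{a | p a ∧ f a ≠ 0} := by
  simp only [hammingNorm, ← Fintype.card_subtype]
  exact Fintype.card_congr (Equiv.subtypeSubtypeEquivSubtypeInter p fun a => f a ≠ 0)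

lemma hammingNorm_vecMul_fromCols_one {m n R : Type*} [Fintype m] [Fintype n] [DecidableEq m]
    [Semiring R] [DecidableEq R] (u : m → R) (B : Matrix m n R) :
    hammingNorm (Matrix.vecMul u (Matrix.fromCols (1 : Matrix m m R) B))
      = hammingNorm u + hammingNorm (Matrix.vecMul u B) := by
  rw [Matrix.vecMul_fromCols, hammingNorm_sumElim, Matrix.vecMul_one]

lemma dotProduct_update_of_eq_zero {ι R : Type*} [Fintype ι] [DecidableEq ι]
    [NonUnitalNonAssocSemiring R] (u w : ι → R) {j : ι} (x : R) (hw : w j = 0) :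
    u ⬝ᵥ Function.update w j x = u ⬝ᵥ w + u j * x := by
  have : Function.update w j x = w + Pi.single j x := by
    ext i
    rcases eq_or_ne i j with rfl | h <;> simp [*]
  rw [this, dotProduct_add, dotProduct_single]

lemma card_powersetCard_filter_card_inter {ι : Type*} [Fintype ι] [DecidableEq ι]
    (R : Finset ι) {s z : ℕ} (hz : z ≤ s) :
    #{T ∈ powersetCard s (univ : Finset ι) | #(T ∩ R) = z}
      = (#R).choose z * (Fintype.card ι - #R).choose (s - z) := by
  rw [← card_compl, ← card_powersetCard, ← card_powersetCard, ← card_product]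
  have split : ∀ {A B : Finset ι}, A ⊆ R → B ⊆ Rᶜ → (A ∪ B) ∩ R = A ∧ (A ∪ B) \ R = B := by
    intro A B hA hB
    constructor <;> ext i <;> grind [mem_compl]
  refine card_nbij' (fun T => (T ∩ R, T \ R)) (fun p => p.1 ∪ p.2) ?_ ?_ ?_ ?_
  · intro T hT
    simp only [mem_coe, mem_filter, mem_powersetCard, mem_product] at hT ⊢
    refine ⟨⟨inter_subset_right, hT.2⟩, fun i hi => by simp_all, ?_⟩
    have := card_inter_add_card_sdiff T R
    omega
  · rintro ⟨A, B⟩ hAB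
    simp only [mem_coe, mem_filter, mem_powersetCard, mem_product] at hAB ⊢
    obtain ⟨⟨hA, rfl⟩, hB, hBc⟩ := hAB
    have hdisj : Disjoint A B := disjoint_left.2 fun i hiA hiB => mem_compl.1 (hB hiB) (hA hiA)
    rw [card_union_of_disjoint hdisj, (split hA hB).1]
    exact ⟨⟨subset_univ _, by omega⟩, rfl⟩
  · intro T _
    exact (union_comm _ _).trans (sdiff_union_inter T R)
  · rintro ⟨A, B⟩ hAB
    simp only [mem_coe, mem_product, mem_powersetCard] at hAB
    simp [split hAB.1.1 hAB.2.1]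

lemma sum_range_succ_eq_add_sum_Icc_two {M : Type*} [AddCommMonoid M] (f : ℕ → M) (hf : f 1 = 0)
    (r : ℕ) : ∑ z ∈ range (r + 1), f z = f 0 + ∑ z ∈ Icc 2 r, f z := by
  rcases Nat.eq_zero_or_pos r with rfl | hr
  · simp
  · rw [range_eq_Ico, sum_eq_sum_Ico_succ_bot (by omega), sum_eq_sum_Ico_succ_bot (by omega), hf,
      zero_add, ← Ico_add_one_right_eq_Icc]

/-- `zeroSumCount q n` is the number of `x ∈ (F_q^×)^n` with `∑ xᵢ = 0`: such an `x` is the same as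
its first `n - 1` coordinates, subject only to their sum being nonzero. -/
def zeroSumCount (q : ℤ) : ℕ → ℤ
  | 0 => 1
  | n + 1 => (q - 1) ^ n - zeroSumCount q n

lemma zeroSumCount_succ (q : ℤ) (n : ℕ) :
    zeroSumCount q (n + 1) = ∑ i ∈ Icc 1 n, (q - 1) ^ i * (-1) ^ (n + i) := by
  induction n with
  | zero => simp [zeroSumCount]
  | succ n ih =>
    have hsign : ∀ i, (q - 1) ^ i * (-1) ^ (n + 1 + i) = -((q - 1) ^ i * (-1) ^ (n + i)) := by
      intro i
      rw [add_right_comm, pow_succ]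
      ring
    rw [zeroSumCount, ih, sum_Icc_succ_top (by omega), sum_congr rfl fun i _ => hsign i,
      sum_neg_distrib, ← two_mul, pow_mul, neg_one_sq, one_pow]
    ring

lemma card_filter_add_mul_eq_zero {α F : Type*} [Field F] [Fintype F] [DecidableEq F]
    (S : Finset α) (f : α → F) {c : F} (hc : c ≠ 0) :
    #{p ∈ S ×ˢ (univ : Finset F).erase 0 | f p.1 + c * p.2 = 0} = #{a ∈ S | f a ≠ 0} := by
  refine card_nbij' Prod.fst (fun a => (a, -f a / c)) ?_ ?_ ?_ ?_
  · intro p hp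
    simp only [mem_coe, mem_filter, mem_product, mem_erase] at hp ⊢
    refine ⟨hp.1.1, fun h => hp.1.2.1 ?_⟩
    simpa [h, hc] using hp.2
  · intro a ha
    simp only [mem_coe, mem_filter, mem_product, mem_erase, mem_univ, and_true] at ha ⊢
    refine ⟨⟨ha.1, div_ne_zero (neg_ne_zero.2 ha.2) hc⟩, ?_⟩
    field_simp
    ring
  · intro p hp
    simp only [mem_coe, mem_filter] at hp
    refine Prod.ext rfl ?_
    dsimp only
    rw [div_eq_iff hc]
    linear_combination -hp.2
  · intro a _
    rfl

section Support

variable {F ι : Type*} [Zero F] [Fintype F] [DecidableEq F] [Fintype ι] [DecidableEq ι]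

variable (F) in
def vectorsWithSupport (T : Finset ι) : Finset (ι → F) := {v | ∀ i, v i ≠ 0 ↔ i ∈ T}

lemma mem_vectorsWithSupport {T : Finset ι} {v : ι → F} :
    v ∈ vectorsWithSupport F T ↔ ∀ i, v i ≠ 0 ↔ i ∈ T := by
  simp [vectorsWithSupport]

lemma card_filter_vectorsWithSupport_insert {T : Finset ι} {j : ι} (hj : j ∉ T)
    (P : (ι → F) → Prop) [DecidablePred P] :
    #{v ∈ vectorsWithSupport F (insert j T) | P v}
      = #{p ∈ vectorsWithSupport F T ×ˢ (univ.erase 0) | P (Function.update p.1 j p.2)} := by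
  refine card_nbij' (fun v => (Function.update v j 0, v j)) (fun p => Function.update p.1 j p.2)
    ?_ ?_ ?_ ?_
  · intro v hv
    simp only [mem_coe, mem_filter, mem_vectorsWithSupport, mem_insert] at hv
    simp only [mem_coe, mem_filter, mem_product, mem_vectorsWithSupport, mem_erase,
      mem_univ, and_true, Function.update_idem, Function.update_eq_self]
    refine ⟨⟨fun i => ?_, (hv.1 j).2 (.inl rfl)⟩, hv.2⟩
    rcases eq_or_ne i j with rfl | hij
    · simp [hj]
    · simp [hij, hv.1 i]
  · intro p hp
    simp only [mem_coe, mem_filter, mem_product, mem_vectorsWithSupport, mem_erase,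
      mem_univ, and_true] at hp
    simp only [mem_coe, mem_filter, mem_vectorsWithSupport, mem_insert]
    refine ⟨fun i => ?_, hp.2⟩
    rcases eq_or_ne i j with rfl | hij
    · simp [hp.1.2]
    · simp [hij, hp.1.1 i]
  · intro v hv
    simp
  · intro p hp
    simp only [mem_coe, mem_filter, mem_product, mem_vectorsWithSupport] at hp
    have hpj : p.1 j = 0 := not_not.1 fun h => hj ((hp.1.1 j).1 h)
    simp [← hpj]

lemma card_vectorsWithSupport (T : Finset ι) :
    #(vectorsWithSupport F T) = (Fintype.card F - 1) ^ #T := by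
  induction T using Finset.induction_on with
  | empty =>
    rw [card_eq_one.2 ⟨0, ?_⟩, card_empty, pow_zero]
    ext v
    simp [mem_vectorsWithSupport, funext_iff]
  | insert j T hj ih =>
    have h := card_filter_vectorsWithSupport_insert hj fun _ : ι → F => True
    simp only [filter_true] at h
    rw [h, card_product, ih, card_erase_of_mem (mem_univ _), card_univ, card_insert_of_notMem hj,
      pow_succ]

lemma card_filter_hammingNorm_eq_sum (s : ℕ) (P : (ι → F) → Prop) [DecidablePred P] :
    #{v : ι → F | hammingNorm v = s ∧ P v}
      = ∑ T ∈ powersetCard s univ, #{v ∈ vectorsWithSupport F T | P v} := by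
  rw [card_eq_sum_card_fiberwise (f := fun v : ι → F => ({i | v i ≠ 0} : Finset ι))
    fun v hv => mem_powersetCard_univ.2 (mem_filter.1 hv).2.1]
  refine sum_congr rfl fun T hT => ?_
  rw [filter_filter]
  congr 1
  ext v
  have hsupp : ({i | v i ≠ 0} : Finset ι) = T ↔ ∀ i, v i ≠ 0 ↔ i ∈ T := by
    simp [Finset.ext_iff]
  simp only [mem_filter, mem_univ, true_and, mem_vectorsWithSupport, hsupp]
  constructor
  · exact fun h => ⟨h.2, h.1.2⟩
  · intro h
    refine ⟨⟨?_, h.2⟩, h.1⟩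
    rw [hammingNorm, ← mem_powersetCard_univ.1 hT]
    exact congrArg card (hsupp.2 h.1)

lemma card_hammingNorm_eq (s : ℕ) :
    #{v : ι → F | hammingNorm v = s} = (Fintype.card ι).choose s * (Fintype.card F - 1) ^ s := by
  have h := card_filter_hammingNorm_eq_sum (F := F) (ι := ι) s fun _ => True
  simp only [and_true, filter_true] at h
  rw [h, sum_congr rfl fun T hT => by rw [card_vectorsWithSupport, mem_powersetCard_univ.1 hT],
    sum_const, card_powersetCard, card_univ, smul_eq_mul]

end Support

section DotProduct

variable {F ι : Type*} [Field F] [Fintype F] [DecidableEq F] [Fintype ι] [DecidableEq ι]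

lemma card_filter_dotProduct_vectorsWithSupport_insert (u : ι → F) {T : Finset ι} {j : ι}
    (hj : j ∉ T) :
    #{v ∈ vectorsWithSupport F (insert j T) | u ⬝ᵥ v = 0}
      = #{p ∈ vectorsWithSupport F T ×ˢ (univ : Finset F).erase 0 | u ⬝ᵥ p.1 + u j * p.2 = 0} := by
  rw [card_filter_vectorsWithSupport_insert hj]
  congr 1
  refine filter_congr fun p hp => ?_
  rw [dotProduct_update_of_eq_zero]
  exact not_not.1 fun h => hj (((mem_vectorsWithSupport.1 (mem_product.1 hp).1) j).1 h)

lemma card_vectorsWithSupport_dotProduct_eq_zero (u : ι → F) (T : Finset ι) :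
    (#{v ∈ vectorsWithSupport F T | u ⬝ᵥ v = 0} : ℤ)
      = ((Fintype.card F : ℤ) - 1) ^ #{i ∈ T | u i = 0}
        * zeroSumCount (Fintype.card F) #{i ∈ T | u i ≠ 0} := by
  induction T using Finset.induction_on with
  | empty =>
    rw [filter_true_of_mem fun v hv => ?_]
    · simp [card_vectorsWithSupport, zeroSumCount]
    · have : v = 0 := funext fun i => by simpa using mem_vectorsWithSupport.1 hv i
      simp [this]
  | insert j T hj ih =>
    have hj' : ∀ p : F → Prop, [DecidablePred p] → j ∉ T.filter fun i => p (u i) :=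
      fun _ _ h => hj (mem_filter.1 h).1
    rw [card_filter_dotProduct_vectorsWithSupport_insert u hj]
    by_cases huj : u j = 0
    · -- the new coordinate does not enter the equation and is free in `F^×`
      simp only [huj, zero_mul, add_zero]
      rw [filter_product_left (fun w => u ⬝ᵥ w = 0), card_product, card_erase_of_mem (mem_univ _),
        card_univ, filter_insert, if_pos huj, filter_insert, if_neg (not_not.2 huj),
        card_insert_of_notMem (hj' (· = 0))]
      push_cast [Nat.cast_pred Fintype.card_pos]
      rw [ih, pow_succ]
      ring
    · -- the new coordinate is determined by the others, whose dot product must be nonzero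
      have hneg : (#{w ∈ vectorsWithSupport F T | u ⬝ᵥ w ≠ 0} : ℤ)
          = #(vectorsWithSupport F T) - #{w ∈ vectorsWithSupport F T | u ⬝ᵥ w = 0} := by
        rw [← card_filter_add_card_filter_not (s := vectorsWithSupport F T) fun w => u ⬝ᵥ w = 0]
        push_cast
        ring
      have hT := card_filter_add_card_filter_not (s := T) fun i => u i = 0
      rw [card_filter_add_mul_eq_zero _ _ huj, hneg, ih, card_vectorsWithSupport, filter_insert,
        if_neg huj, filter_insert, if_pos huj, card_insert_of_notMem (hj' (· ≠ 0)), zeroSumCount,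
        ← hT]
      push_cast [Nat.cast_pred Fintype.card_pos]
      ring

lemma card_hammingNorm_dotProduct_eq_zero (u : ι → F) (s : ℕ) :
    (#{v : ι → F | hammingNorm v = s ∧ u ⬝ᵥ v = 0} : ℤ)
      = ∑ z ∈ range (hammingNorm u + 1),
          (if z ≤ s then ((hammingNorm u).choose z : ℤ)
            * ((Fintype.card ι - hammingNorm u).choose (s - z) : ℤ)
            * ((Fintype.card F : ℤ) - 1) ^ (s - z) else 0)
          * zeroSumCount (Fintype.card F) z := by
  set R : Finset ι := {i | u i ≠ 0}
  have hR : hammingNorm u = #R := rfl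
  have hcount : ∀ T ∈ powersetCard s (univ : Finset ι),
      (#{v ∈ vectorsWithSupport F T | u ⬝ᵥ v = 0} : ℤ)
        = ((Fintype.card F : ℤ) - 1) ^ (s - #(T ∩ R)) * zeroSumCount (Fintype.card F) #(T ∩ R) := by
    intro T hT
    have hTR : #{i ∈ T | u i ≠ 0} = #(T ∩ R) := by
      congr 1
      ext i
      simp [R]
    have hT' := card_filter_add_card_filter_not (s := T) fun i => u i = 0
    simp only [← ne_eq, hTR, mem_powersetCard_univ.1 hT] at hT'
    rw [card_vectorsWithSupport_dotProduct_eq_zero, hTR, show #{i ∈ T | u i = 0} = s - #(T ∩ R) by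
      omega]
  have hmaps : ∀ T ∈ powersetCard s (univ : Finset ι), #(T ∩ R) ∈ range (#R + 1) :=
    fun T _ => mem_range_succ_iff.2 (card_le_card inter_subset_right)
  rw [hR, card_filter_hammingNorm_eq_sum, Nat.cast_sum, sum_congr rfl hcount,
    ← sum_fiberwise_of_maps_to hmaps]
  refine sum_congr rfl fun z _ => ?_
  rw [sum_congr rfl fun T hT => by rw [(mem_filter.1 hT).2], sum_const, nsmul_eq_mul]
  split_ifs with hzs
  · rw [card_powersetCard_filter_card_inter R hzs, Fintype.card]
    push_cast
    ring
  · rw [card_eq_zero.2 (filter_eq_empty_iff.2 fun T hT (h : #(T ∩ R) = z) => hzs (h ▸ (card_le_card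
      inter_subset_left).trans (mem_powersetCard_univ.1 hT).le))]
    simp

lemma card_hammingNorm_dotProduct_ne_zero (u : ι → F) (s : ℕ) :
    (#{v : ι → F | hammingNorm v = s ∧ u ⬝ᵥ v ≠ 0} : ℤ)
      = (Fintype.card ι).choose s * ((Fintype.card F : ℤ) - 1) ^ s
        - #{v : ι → F | hammingNorm v = s ∧ u ⬝ᵥ v = 0} := by
  have h := card_filter_add_card_filter_not (s := {v : ι → F | hammingNorm v = s})
    fun v => u ⬝ᵥ v = 0
  simp only [filter_filter, ← ne_eq, card_hammingNorm_eq] at h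
  rw [← Nat.cast_pred Fintype.card_pos, ← Nat.cast_pow, ← Nat.cast_mul, ← h]
  push_cast
  ring

end DotProduct

/-- The `if z ≤ s` guard implements the convention `C(n, j) = 0` for `j < 0`. -/
theorem stmt_9_general (F : Type) [Field F] [Fintype F] [DecidableEq F]
    (q : ℕ) (hq : q = Fintype.card F)
    (t s : ℕ)
    (A : Matrix (Fin t) (Fin t ⊕ {v : Fin t → F // hammingNorm v = s}) F)
    (hA1 : ∀ r c, A r (Sum.inl c) = if r = c then 1 else 0)
    (hA2 : ∀ r v, A r (Sum.inr v) = v.1 r)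
    (N : ℕ) (hN : N = t + Nat.choose t s * (q - 1) ^ s)
    (ψ : ℕ → ℤ)
    (hψ : ∀ r : ℕ, ψ r = ∑ z ∈ Finset.Icc 2 r,
      (if z ≤ s then
        (Nat.choose r z : ℤ) * (Nat.choose (t - r) (s - z) : ℤ) * ((q : ℤ) - 1) ^ (s - z)
      else 0) * ∑ i ∈ Finset.Icc 1 (z - 1), ((q : ℤ) - 1) ^ i * (-1 : ℤ) ^ (z - 1 + i))
    (r : ℕ)
    (u : Fin t → F) (hu : hammingNorm u = r) :
    (hammingNorm (Matrix.vecMul u A) : ℤ)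
      = (N : ℤ) - (t : ℤ) + (r : ℤ) - ψ r
        - (Nat.choose (t - r) s : ℤ) * ((q : ℤ) - 1) ^ s := by
  subst hq hN hu
  set B : Matrix (Fin t) {v : Fin t → F // hammingNorm v = s} F := Matrix.of fun i v => v.1 i
  have hA : A = Matrix.fromCols 1 B := by
    ext i (j | v) <;> simp [B, hA1, hA2, Matrix.one_apply]
  have hB : hammingNorm (Matrix.vecMul u B) = #{v : Fin t → F | hammingNorm v = s ∧ u ⬝ᵥ v ≠ 0} :=
    hammingNorm_subtype _ (u ⬝ᵥ ·)
  have hψ' : ψ (hammingNorm u) = ∑ z ∈ Icc 2 (hammingNorm u),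
      (if z ≤ s then ((hammingNorm u).choose z : ℤ) * ((t - hammingNorm u).choose (s - z) : ℤ)
        * ((Fintype.card F : ℤ) - 1) ^ (s - z) else 0) * zeroSumCount (Fintype.card F) z := by
    refine (hψ _).trans (sum_congr rfl fun z hz => ?_)
    obtain ⟨n, rfl⟩ : ∃ n, z = n + 1 := ⟨z - 1, by grind⟩
    rw [zeroSumCount_succ, Nat.add_sub_cancel]
  rw [hA, hammingNorm_vecMul_fromCols_one, Nat.cast_add, hB,
    card_hammingNorm_dotProduct_ne_zero, card_hammingNorm_dotProduct_eq_zero,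
    sum_range_succ_eq_add_sum_Icc_two _ (by simp [zeroSumCount]), Fintype.card_fin, ← hψ']
  simp [zeroSumCount, Nat.cast_pred Fintype.card_pos]
  ring

/-- weight distribution of the code generated by `(I_t | B̄)`, where the
columns of `B̄` are all vectors of `F_q^t` of Hamming weight exactly `s`. The convention
`C(n, j) = 0` for `j < 0` is implemented by the `if z ≤ s` guard. -/
theorem stmt_9 (F : Type) [Field F] [Fintype F] [DecidableEq F]
    (q : ℕ) (hq : q = Fintype.card F)
    (t s : ℕ) (hs1 : 2 ≤ s) (hs2 : s ≤ t)
    (A : Matrix (Fin t) (Fin t ⊕ {v : Fin t → F // hammingNorm v = s}) F)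
    (hA1 : ∀ r c, A r (Sum.inl c) = if r = c then 1 else 0)
    (hA2 : ∀ r v, A r (Sum.inr v) = v.1 r)
    (N : ℕ) (hN : N = t + Nat.choose t s * (q - 1) ^ s)
    (ψ : ℕ → ℤ)
    (hψ : ∀ r : ℕ, ψ r = ∑ z ∈ Finset.Icc 2 r,
      (if z ≤ s then
        (Nat.choose r z : ℤ) * (Nat.choose (t - r) (s - z) : ℤ) * ((q : ℤ) - 1) ^ (s - z)
      else 0) * ∑ i ∈ Finset.Icc 1 (z - 1), ((q : ℤ) - 1) ^ i * (-1 : ℤ) ^ (z - 1 + i))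
    (r : ℕ) (hr : r ≤ t)
    (u : Fin t → F) (hu : hammingNorm u = r) :
    (hammingNorm (Matrix.vecMul u A) : ℤ)
      = (N : ℤ) - (t : ℤ) + (r : ℤ) - ψ r
        - (Nat.choose (t - r) s : ℤ) * ((q : ℤ) - 1) ^ s :=
  stmt_9_general F q hq t s A hA1 hA2 N hN ψ hψ r u hu
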